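/- Let n₁, n₂ ≥ 1 with n := n₁ + n₂ ≥ 2, let ν₁ and ν₂ be finite positive Borel measures on [0,2π)^{n₁} and [0,2π)^{n₂} respectively, and assume the product measure ν := ν₁ ⊗ ν₂ on [0,2π)ⁿ is not identically zero and has vanishing mixed Fourier coefficients. Let α ∈ ℝ and define f : 𝔻ⁿ → ℂ by f(w) = iα + (2π)⁻ⁿ ∫_{[0,2π)ⁿ} (2 ∏_{j=1}^n (1 − w_j e^{−i s_j})⁻¹ − 1) dν(s). Then f does not depend on all of its variables: there exists an index j ∈ {1,…,n} such that f(w) = f(w′) for all w, w′ ∈ 𝔻ⁿ that agree in every coordinate except possibly the j-th. -/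

import Mathlib

open MeasureTheory Complex Finset Real

noncomputable section

/-- The box `[0,2π)ⁿ` inside `ℝⁿ`. -/
def box (n : ℕ) : Set (Fin n → ℝ) := Set.univ.pi fun _ => Set.Ico 0 (2 * π)

/-- A measure `ν` (on `[0,2π)ⁿ`, viewed as a measure on `ℝⁿ` supported in the box)
has vanishing mixed Fourier coefficients if its `m`-th Fourier coefficient vanishes
for every multi-index `m ∈ ℤⁿ` with at least one positive and at least one negative
entry. -/
def VanishingMixedFourier (n : ℕ) (ν : Measure (Fin n → ℝ)) : Prop :=
  ∀ m : Fin n → ℤ, (∃ j, 0 < m j) → (∃ j, m j < 0) →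
    ∫ s : Fin n → ℝ, ∏ j, Complex.exp (I * (m j : ℂ) * (s j : ℂ)) ∂ν = 0

/-- `ν = c • λ_{[0,2π)ⁿ}` for some constant `c ≥ 0`. -/
def IsBoxLebesgueMultiple (n : ℕ) (ν : Measure (Fin n → ℝ)) : Prop :=
  ∃ c : ℝ, 0 ≤ c ∧ ν = ENNReal.ofReal c • (volume.restrict (box n))

/-- Equivalence splitting off the first coordinate of a tuple. -/
def piSplitEquiv (n : ℕ) : (Fin (n + 1) → ℕ) ≃ ℕ × (Fin n → ℕ) where
  toFun m := (m 0, fun j => m j.succ)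
  invFun p := Fin.cons p.1 p.2
  left_inv m := Fin.cons_self_tail m
  right_inv p := by simp [Fin.cons_zero, Fin.cons_succ]

lemma pi_geom {A : Type*} [NormedField A] [CompleteSpace A] :
    ∀ (n : ℕ) (z : Fin n → A), (∀ j, ‖z j‖ < 1) →
      Summable (fun m : Fin n → ℕ => ‖∏ j, z j ^ m j‖) ∧
      ∑' m : Fin n → ℕ, ∏ j, z j ^ m j = ∏ j, (1 - z j)⁻¹ := by
  intro n
  induction n with
  | zero =>
    intro z _
    constructor
    · exact .of_finite
    · have h1 : ∀ m : Fin 0 → ℕ, ∏ j, z j ^ m j = 1 := fun m => by simp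
      rw [tsum_congr h1]
      simp [tsum_eq_single (fun (j : Fin 0) => 0) (fun b hb => absurd (Subsingleton.elim b _) hb)]
  | succ n ih =>
    intro z hz
    obtain ⟨ihs, iht⟩ := ih (fun j => z j.succ) (fun j => hz j.succ)
    set e := piSplitEquiv n with he
    have h0 : Summable (fun k : ℕ => ‖z 0 ^ k‖) := by
      simp only [norm_pow]
      exact summable_geometric_of_lt_one (norm_nonneg _) (hz 0)
    have hF : ∀ m : Fin (n + 1) → ℕ,
        ∏ j, z j ^ m j = z 0 ^ m 0 * ∏ j : Fin n, z j.succ ^ m j.succ :=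
      fun m => Fin.prod_univ_succ _
    have hprod : Summable (fun p : ℕ × (Fin n → ℕ) =>
        ‖z 0 ^ p.1‖ * ‖∏ j : Fin n, z j.succ ^ p.2 j‖) :=
      by
        apply Summable.mul_of_nonneg h0 ihs
        · exact fun k => norm_nonneg _
        · exact fun m => norm_nonneg _
    constructor
    · have h2 := hprod.comp_injective e.injective
      refine h2.congr fun m => ?_
      simp only [Function.comp_apply, he, piSplitEquiv, Equiv.coe_fn_mk]
      rw [hF m, norm_mul]; rfl
    · have h1 : ∑' m : Fin (n+1) → ℕ, ∏ j, z j ^ m j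
          = ∑' p : ℕ × (Fin n → ℕ), z 0 ^ p.1 * ∏ j : Fin n, z j.succ ^ p.2 j := by
        rw [← Equiv.tsum_eq e (fun p : ℕ × (Fin n → ℕ) =>
          z 0 ^ p.1 * ∏ j : Fin n, z j.succ ^ p.2 j)]
        exact tsum_congr fun m => hF m
      rw [h1, ← tsum_mul_tsum_of_summable_norm h0 ihs, iht,
        tsum_geometric_of_norm_lt_one (hz 0), Fin.prod_univ_succ]

/-- Fourier coefficient of a measure. -/
def fcoef {k : ℕ} (μ : Measure (Fin k → ℝ)) (m : Fin k → ℤ) : ℂ :=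
  ∫ s : Fin k → ℝ, ∏ j, Complex.exp (I * (m j : ℂ) * (s j : ℂ)) ∂μ

lemma continuous_fexp {k : ℕ} (m : Fin k → ℤ) :
    Continuous (fun s : Fin k → ℝ => ∏ j, Complex.exp (I * (m j : ℂ) * (s j : ℂ))) := by
  refine continuous_finset_prod _ fun j _ => Complex.continuous_exp.comp ?_
  exact (continuous_const.mul ((Complex.continuous_ofReal.comp (continuous_apply j))))

lemma fcoef_neg {k : ℕ} (μ : Measure (Fin k → ℝ)) (m : Fin k → ℤ) :
    fcoef μ (fun j => -(m j)) = (starRingEnd ℂ) (fcoef μ m) := by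
  unfold fcoef
  rw [← integral_conj]
  refine integral_congr_ae (Filter.Eventually.of_forall fun s => ?_)
  dsimp only
  rw [map_prod]
  refine Finset.prod_congr rfl fun j _ => ?_
  rw [← Complex.exp_conj]
  congr 1
  simp only [map_mul, Complex.conj_I, Complex.conj_ofReal, map_intCast]
  push_cast
  ring

lemma measurable_finAppend (n₁ n₂ : ℕ) :
    Measurable (fun p : (Fin n₁ → ℝ) × (Fin n₂ → ℝ) => Fin.append p.1 p.2) := by
  rw [measurable_pi_iff]
  intro i
  refine Fin.addCases (motive := fun i => Measurable fun p : (Fin n₁ → ℝ) × (Fin n₂ → ℝ) =>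
    Fin.append p.1 p.2 i) (fun j => ?_) (fun j => ?_) i
  · simp only [Fin.append_left]
    exact (measurable_pi_apply j).comp measurable_fst
  · simp only [Fin.append_right]
    exact (measurable_pi_apply j).comp measurable_snd

lemma fcoef_append {n₁ n₂ : ℕ} (ν₁ : Measure (Fin n₁ → ℝ)) (ν₂ : Measure (Fin n₂ → ℝ))
    [IsFiniteMeasure ν₁] [IsFiniteMeasure ν₂] (M : Fin (n₁ + n₂) → ℤ) :
    fcoef (Measure.map (fun p : (Fin n₁ → ℝ) × (Fin n₂ → ℝ) => Fin.append p.1 p.2)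
        (ν₁.prod ν₂)) M
      = fcoef ν₁ (fun j => M (Fin.castAdd n₂ j)) * fcoef ν₂ (fun j => M (Fin.natAdd n₁ j)) := by
  unfold fcoef
  rw [integral_map (measurable_finAppend n₁ n₂).aemeasurable
    (continuous_fexp M).aestronglyMeasurable]
  rw [← MeasureTheory.integral_prod_mul
    (f := fun s₁ : Fin n₁ → ℝ => ∏ j, Complex.exp (I * (M (Fin.castAdd n₂ j) : ℂ) * (s₁ j : ℂ)))
    (g := fun s₂ : Fin n₂ → ℝ => ∏ j, Complex.exp (I * (M (Fin.natAdd n₁ j) : ℂ) * (s₂ j : ℂ)))]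
  refine integral_congr_ae (Filter.Eventually.of_forall fun p => ?_)
  dsimp only
  rw [Fin.prod_univ_add]
  congr 1
  · exact Finset.prod_congr rfl fun j _ => by rw [Fin.append_left]
  · exact Finset.prod_congr rfl fun j _ => by rw [Fin.append_right]

lemma norm_wexp {k : ℕ} (w : Fin k → ℂ) (s : Fin k → ℝ) (j : Fin k) :
    ‖w j * Complex.exp (-(I * (s j : ℂ)))‖ = ‖w j‖ := by
  rw [norm_mul]
  simp [Complex.norm_exp]

lemma integral_prodinv_eq_tsum {k : ℕ} (μ : Measure (Fin k → ℝ)) [IsFiniteMeasure μ]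
    (w : Fin k → ℂ) (hw : ∀ j, ‖w j‖ < 1) :
    ∫ s : Fin k → ℝ, ∏ j, (1 - w j * Complex.exp (-(I * (s j : ℂ))))⁻¹ ∂μ
      = ∑' m : Fin k → ℕ, (∏ j, w j ^ m j) * fcoef μ (fun j => -(m j : ℤ)) := by
  have key : ∀ s : Fin k → ℝ, ∏ j, (1 - w j * Complex.exp (-(I * (s j : ℂ))))⁻¹
      = ∑' m : Fin k → ℕ, ∏ j, (w j * Complex.exp (-(I * (s j : ℂ)))) ^ m j := by
    intro s
    exact ((pi_geom k _ (fun j => by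
      rw [norm_wexp]; exact hw j)).2).symm
  have hcont : ∀ m : Fin k → ℕ,
      Continuous (fun s : Fin k → ℝ => ∏ j, (w j * Complex.exp (-(I * (s j : ℂ)))) ^ m j) := by
    intro m
    refine continuous_finset_prod _ fun j _ => Continuous.pow ?_ _
    have h1 : Continuous fun s : Fin k → ℝ => ((s j : ℂ)) :=
      Complex.continuous_ofReal.comp (continuous_apply j)
    exact continuous_const.mul (Complex.continuous_exp.comp ((continuous_const.mul h1).neg))
  -- summability of the coefficient bounds
  have habs : ∀ j, ‖(‖w j‖ : ℝ)‖ < 1 := by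
    intro j
    rw [Real.norm_eq_abs, _root_.abs_of_nonneg (norm_nonneg _)]
    exact hw j
  have hc_sum : Summable (fun m : Fin k → ℕ => ∏ j, ‖w j‖ ^ m j) := by
    refine ((pi_geom k (fun j => (‖w j‖ : ℝ)) habs).1).congr fun m => ?_
    rw [Real.norm_of_nonneg (Finset.prod_nonneg fun j _ => pow_nonneg (norm_nonneg _) _)]
  have hval : ∀ (m : Fin k → ℕ) (s : Fin k → ℝ),
      (‖∏ j, (w j * Complex.exp (-(I * (s j : ℂ)))) ^ m j‖₊ : ENNReal)
        = ENNReal.ofReal (∏ j, ‖w j‖ ^ m j) := by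
    intro m s
    rw [← enorm_eq_nnnorm, ← ofReal_norm]
    congr 1
    rw [norm_prod]
    exact Finset.prod_congr rfl fun j _ => by rw [norm_pow, norm_wexp]
  rw [integral_congr_ae (Filter.Eventually.of_forall key)]
  rw [integral_tsum (fun m => (hcont m).aestronglyMeasurable) ?_]
  · refine tsum_congr fun m => ?_
    unfold fcoef
    rw [← integral_const_mul]
    refine integral_congr_ae (Filter.Eventually.of_forall fun s => ?_)
    dsimp only
    rw [← Finset.prod_mul_distrib]
    refine Finset.prod_congr rfl fun j _ => ?_
    rw [mul_pow, ← Complex.exp_nat_mul]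
    congr 2
    push_cast
    ring
  · have : ∀ m : Fin k → ℕ,
        ∫⁻ s, (‖∏ j, (w j * Complex.exp (-(I * (s j : ℂ)))) ^ m j‖₊ : ENNReal) ∂μ
          = ENNReal.ofReal (∏ j, ‖w j‖ ^ m j) * μ Set.univ := by
      intro m
      simp_rw [hval m]
      exact lintegral_const _
    simp only [enorm_eq_nnnorm]
    rw [tsum_congr this, ENNReal.tsum_mul_right,
      ← ENNReal.ofReal_tsum_of_nonneg (fun m => Finset.prod_nonneg fun j _ =>
        pow_nonneg (norm_nonneg _) _) hc_sum]
    exact ENNReal.mul_ne_top ENNReal.ofReal_ne_top (measure_ne_top μ _)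

lemma integrable_prodinv {k : ℕ} (μ : Measure (Fin k → ℝ)) [IsFiniteMeasure μ]
    (w : Fin k → ℂ) (hw : ∀ j, ‖w j‖ < 1) :
    Integrable (fun s : Fin k → ℝ => ∏ j, (1 - w j * Complex.exp (-(I * (s j : ℂ))))⁻¹) μ := by
  have hne : ∀ (s : Fin k → ℝ) (j : Fin k), 1 - w j * Complex.exp (-(I * (s j : ℂ))) ≠ 0 := by
    intro s j
    refine sub_ne_zero_of_ne fun h => ?_
    have h2 := norm_wexp w s j
    rw [← h] at h2
    simp only [norm_one] at h2
    have := hw j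
    rw [← h2] at this
    exact absurd this (lt_irrefl 1)
  have hcont : Continuous fun s : Fin k → ℝ =>
      ∏ j, (1 - w j * Complex.exp (-(I * (s j : ℂ))))⁻¹ := by
    refine continuous_finset_prod _ fun j _ => Continuous.inv₀ ?_ (fun s => hne s j)
    have h1 : Continuous fun s : Fin k → ℝ => ((s j : ℂ)) :=
      Complex.continuous_ofReal.comp (continuous_apply j)
    exact continuous_const.sub
      (continuous_const.mul (Complex.continuous_exp.comp ((continuous_const.mul h1).neg)))
  refine Integrable.mono' (integrable_const (∏ j, (1 - ‖w j‖)⁻¹))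
    hcont.aestronglyMeasurable (Filter.Eventually.of_forall fun s => ?_)
  rw [norm_prod]
  refine Finset.prod_le_prod (fun j _ => norm_nonneg _) fun j _ => ?_
  rw [norm_inv]
  have hpos : (0:ℝ) < 1 - ‖w j‖ := by linarith [hw j]
  have hle : 1 - ‖w j‖ ≤ ‖1 - w j * Complex.exp (-(I * (s j : ℂ)))‖ := by
    have := norm_sub_norm_le (1 : ℂ) (w j * Complex.exp (-(I * (s j : ℂ))))
    rw [norm_one, norm_wexp] at this
    exact this
  exact inv_anti₀ hpos hle

/-- Corollary 5.12: a holomorphic function on `𝔻ⁿ` with non-negative real part whose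
representing measure is a product measure does not depend on all of its variables. -/
theorem product_measure_function_not_all_variables (n₁ n₂ : ℕ) (h₁ : 1 ≤ n₁)
    (h₂ : 1 ≤ n₂) (ν₁ : Measure (Fin n₁ → ℝ)) (ν₂ : Measure (Fin n₂ → ℝ))
    [IsFiniteMeasure ν₁] [IsFiniteMeasure ν₂]
    (hs₁ : ν₁ (box n₁)ᶜ = 0) (hs₂ : ν₂ (box n₂)ᶜ = 0)
    (ν : Measure (Fin (n₁ + n₂) → ℝ))
    (hν : ν = Measure.map
      (fun p : (Fin n₁ → ℝ) × (Fin n₂ → ℝ) => Fin.append p.1 p.2) (ν₁.prod ν₂))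
    (hne : ν ≠ 0) (hvan : VanishingMixedFourier (n₁ + n₂) ν)
    (α : ℝ) (f : (Fin (n₁ + n₂) → ℂ) → ℂ)
    (hf : ∀ w : Fin (n₁ + n₂) → ℂ, f w =
      I * (α : ℂ) + (((2 * π : ℝ) : ℂ) ^ (n₁ + n₂))⁻¹ *
        ∫ s : Fin (n₁ + n₂) → ℝ,
          (2 * ∏ j, (1 - w j * Complex.exp (-(I * s j)))⁻¹ - 1) ∂ν) :
    ∃ j : Fin (n₁ + n₂), ∀ w w' : Fin (n₁ + n₂) → ℂ,
      (∀ l, ‖w l‖ < 1) → (∀ l, ‖w' l‖ < 1) →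
      (∀ l, l ≠ j → w l = w' l) → f w = f w' := by
  haveI : IsFiniteMeasure ν := by
    rw [hν]; exact Measure.isFiniteMeasure_map _ _
  -- choice of the coordinate with vanishing coefficients
  have key : ∃ j : Fin (n₁ + n₂), ∀ m : Fin (n₁ + n₂) → ℕ, 0 < m j →
      fcoef ν (fun l => -(m l : ℤ)) = 0 := by
    by_cases hA : ∀ p : Fin n₁ → ℤ, (∃ i, 0 < p i) → fcoef ν₁ p = 0
    · refine ⟨Fin.castAdd n₂ ⟨0, h₁⟩, fun m hm => ?_⟩
      rw [hν, fcoef_append]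
      have hz : fcoef ν₁ (fun l => ((fun l => -(m l : ℤ)) (Fin.castAdd n₂ l))) = 0 := by
        have : (fun l => ((fun l => -(m l : ℤ)) (Fin.castAdd n₂ l)))
            = fun l => -((fun l => (m (Fin.castAdd n₂ l) : ℤ)) l) := rfl
        rw [this, fcoef_neg, hA _ ⟨⟨0, h₁⟩, by exact_mod_cast hm⟩, map_zero]
      rw [hz, zero_mul]
    · push_neg at hA
      obtain ⟨p, hp_pos, hp_ne⟩ := hA
      refine ⟨Fin.natAdd n₁ ⟨0, h₂⟩, fun m hm => ?_⟩
      have h2 : fcoef ν₂ (fun l => -(m (Fin.natAdd n₁ l) : ℤ)) = 0 := by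
        set M' : Fin (n₁ + n₂) → ℤ :=
          Fin.append p (fun l => -(m (Fin.natAdd n₁ l) : ℤ)) with hM'
        have hvan' : fcoef ν M' = 0 := by
          refine hvan M' ?_ ?_
          · obtain ⟨i, hi⟩ := hp_pos
            exact ⟨Fin.castAdd n₂ i, by rw [hM', Fin.append_left]; exact hi⟩
          · refine ⟨Fin.natAdd n₁ ⟨0, h₂⟩, ?_⟩
            rw [hM', Fin.append_right]
            simpa using hm
        rw [hν, fcoef_append] at hvan'
        have e1 : (fun l => M' (Fin.castAdd n₂ l)) = p := by
          funext l; rw [hM', Fin.append_left]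
        have e2 : (fun l => M' (Fin.natAdd n₁ l)) = fun l => -(m (Fin.natAdd n₁ l) : ℤ) := by
          funext l; rw [hM', Fin.append_right]
        rw [e1, e2] at hvan'
        exact (mul_eq_zero.mp hvan').resolve_left hp_ne
      rw [hν, fcoef_append]
      have e3 : (fun l => ((fun l => -(m l : ℤ)) (Fin.natAdd n₁ l)))
          = fun l => -(m (Fin.natAdd n₁ l) : ℤ) := rfl
      rw [e3, h2, mul_zero]
  obtain ⟨j, hj⟩ := key
  refine ⟨j, fun w w' hw hw' hww' => ?_⟩
  rw [hf w, hf w']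
  have hint : ∫ s : Fin (n₁ + n₂) → ℝ,
      (2 * ∏ l, (1 - w l * Complex.exp (-(I * s l)))⁻¹ - 1) ∂ν
      = ∫ s : Fin (n₁ + n₂) → ℝ,
      (2 * ∏ l, (1 - w' l * Complex.exp (-(I * s l)))⁻¹ - 1) ∂ν := by
    rw [integral_sub ((integrable_prodinv ν w hw).const_mul 2) (integrable_const 1),
      integral_sub ((integrable_prodinv ν w' hw').const_mul 2) (integrable_const 1),
      integral_const_mul, integral_const_mul,
      integral_prodinv_eq_tsum ν w hw, integral_prodinv_eq_tsum ν w' hw']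
    congr 2
    refine tsum_congr fun m => ?_
    by_cases hmj : m j = 0
    · congr 1
      refine Finset.prod_congr rfl fun l _ => ?_
      by_cases hl : l = j
      · subst hl; rw [hmj, pow_zero, pow_zero]
      · rw [hww' l hl]
    · rw [hj m (Nat.pos_of_ne_zero hmj), mul_zero, mul_zero]
  rw [hint]
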